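/- Consider the chain complex 0 → ℤ →^{Φ_2} ℤ^2 →^{Φ_1} ℤ^{10} → 0 where Φ_2 = 0 and Φ_1 sends the first basis vector to e_5 + e_6 − e_1 − e_2 − e_3 − e_4 and the second to e_7 + e_8 + e_9 + e_{10} − e_5 − e_6. Then H_2 ≅ ℤ, H_1 = 0, and H_0 ≅ ℤ^8. (Bredon homology of p4.) -/
import Mathlib

open LinearMap Submodule

noncomputable def Phi2 : ℤ →ₗ[ℤ] (Fin 2 → ℤ) := 0

noncomputable def Phi1 : (Fin 2 → ℤ) →ₗ[ℤ] (Fin 10 → ℤ) :=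
  Matrix.toLin' !![-1, 0; -1, 0; -1, 0; -1, 0; 1, -1; 1, -1; 0, 1; 0, 1; 0, 1; 0, 1]

abbrev H1 : Type := ↥(ker Phi1) ⧸ (Submodule.comap (ker Phi1).subtype (range Phi2))

abbrev H0 : Type := (Fin 10 → ℤ) ⧸ (range Phi1)

namespace Aux14

def N : Matrix (Fin 10) (Fin 2) ℤ :=
  !![-1, 0; -1, 0; -1, 0; -1, 0; 1, -1; 1, -1; 0, 1; 0, 1; 0, 1; 0, 1]

def M : Matrix (Fin 8) (Fin 10) ℤ :=
  !![-1,1,0,0,0,0,0,0,0,0;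
     -1,0,1,0,0,0,0,0,0,0;
     -1,0,0,1,0,0,0,0,0,0;
     1,0,0,0,1,0,1,0,0,0;
     1,0,0,0,0,1,1,0,0,0;
     0,0,0,0,0,0,-1,1,0,0;
     0,0,0,0,0,0,-1,0,1,0;
     0,0,0,0,0,0,-1,0,0,1]

def P : Matrix (Fin 2) (Fin 10) ℤ :=
  !![-1,0,0,0,0,0,0,0,0,0;
     0,0,0,0,0,0,1,0,0,0]

def G : Matrix (Fin 10) (Fin 8) ℤ :=
  !![0,0,0,0,0,0,0,0;
     1,0,0,0,0,0,0,0;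
     0,1,0,0,0,0,0,0;
     0,0,1,0,0,0,0,0;
     0,0,0,1,0,0,0,0;
     0,0,0,0,1,0,0,0;
     0,0,0,0,0,0,0,0;
     0,0,0,0,0,1,0,0;
     0,0,0,0,0,0,1,0;
     0,0,0,0,0,0,0,1]

lemma hPhi1 : Phi1 = Matrix.toLin' N := rfl

noncomputable def Fmap : (Fin 10 → ℤ) →ₗ[ℤ] (Fin 8 → ℤ) := Matrix.toLin' M

lemma hMN : M * N = 0 := by decide
lemma hMG : M * G = 1 := by decide
lemma hPN : P * N = 1 := by decide
lemma hNPGM : N * P + G * M = 1 := by decide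

lemma Fmap_surj : Function.Surjective Fmap := by
  intro z
  refine ⟨Matrix.toLin' G z, ?_⟩
  have : (Fmap ∘ₗ Matrix.toLin' G) z = z := by
    rw [Fmap, ← Matrix.toLin'_mul, hMG, Matrix.toLin'_one]; rfl
  exact this

lemma ker_eq : range Phi1 = ker Fmap := by
  apply le_antisymm
  · rintro _ ⟨c, rfl⟩
    have : (Fmap ∘ₗ Phi1) c = 0 := by
      rw [Fmap, hPhi1, ← Matrix.toLin'_mul, hMN]
      simp
    exact this
  · intro x hx
    refine ⟨Matrix.toLin' P x, ?_⟩
    have h1 : (Phi1 ∘ₗ Matrix.toLin' P) x + (Matrix.toLin' G ∘ₗ Fmap) x = x := by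
      rw [Fmap, hPhi1, ← Matrix.toLin'_mul, ← Matrix.toLin'_mul]
      have := congrArg Matrix.toLin' hNPGM
      have h2 := congrFun (congrArg DFunLike.coe this) x
      simpa [Matrix.toLin'_one] using h2
    have hx0 : Fmap x = 0 := hx
    simpa [hx0] using h1

lemma Phi1_inj : Function.Injective Phi1 := by
  have h : (Matrix.toLin' P) ∘ₗ Phi1 = LinearMap.id := by
    rw [hPhi1, ← Matrix.toLin'_mul, hPN, Matrix.toLin'_one]
  intro a b hab
  have := congrArg (Matrix.toLin' P) hab
  rwa [show ∀ c, Matrix.toLin' P (Phi1 c) = c from fun c => congrFun (congrArg DFunLike.coe h) c,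
    show Matrix.toLin' P (Phi1 b) = b from congrFun (congrArg DFunLike.coe h) b] at this

end Aux14

theorem stmt_14 :
    Nonempty (↥(ker Phi2) ≃ₗ[ℤ] ℤ) ∧
    Subsingleton H1 ∧
    Nonempty (H0 ≃ₗ[ℤ] (Fin 8 → ℤ)) := by
  refine ⟨⟨?_⟩, ?_, ⟨?_⟩⟩
  · have h : ker Phi2 = ⊤ := by simp [Phi2]
    exact (LinearEquiv.ofEq _ _ h).trans Submodule.topEquiv
  · have hk : ker Phi1 = ⊥ := LinearMap.ker_eq_bot.mpr Aux14.Phi1_inj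
    have hs : Subsingleton ↥(ker Phi1) := by rw [hk]; infer_instance
    constructor
    intro a b
    obtain ⟨a, rfl⟩ := Submodule.Quotient.mk_surjective _ a
    obtain ⟨b, rfl⟩ := Submodule.Quotient.mk_surjective _ b
    exact congrArg _ (Subsingleton.elim a b)
  · exact (Submodule.quotEquivOfEq _ _ Aux14.ker_eq).trans
      (Aux14.Fmap.quotKerEquivOfSurjective Aux14.Fmap_surj)
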